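/- Unload correctness for RKNL: any reachable terminal configuration of RKNL is of the form ⟨σ, t, []⟩ with t a term in β-normal form, and it decodes to t itself. -/

import Mathlib

set_option autoImplicit false
set_option maxHeartbeats 1000000

namespace RKNL

/- Pure lambda terms over a type of variables. -/
inductive Tm (V : Type) : Type
  | var : V → Tm V
  | app : Tm V → Tm V → Tm V
  | lam : V → Tm V → Tm V
  deriving DecidableEq

abbrev Ident : Type := ℕ
abbrev Loc : Type := ℕ

/-- Lookup in an association list (first match). -/
def lookupL {β : Type} : List (ℕ × β) → ℕ → Option β
  | [], _ => none
  | (a, b) :: l, x => if x = a then some b else lookupL l x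

/-- Update of an association list. -/
def updL {β : Type} (l : List (ℕ × β)) (x : ℕ) (b : β) : List (ℕ × β) :=
  l.map fun p => if p.1 = x then (x, b) else p

/-- Environments map identifiers to store locations. -/
abbrev Env : Type := List (Ident × Loc)

/-- Closures pair a term with an environment. -/
abbrev Closure : Type := Tm Ident × Env

/-- Values: terms (normal forms), or abstraction closures annotated with a location. -/
inductive Value : Type
  | tm : Tm Ident → Value
  | abs : Ident → Tm Ident → Env → Loc → Value
  deriving DecidableEq

/-- Storable values (memothunks):
`pend x t e` is the `todo ⊥` placeholder allocated for the abstraction `(λx.t, e)`,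
`todo c` an unevaluated argument thunk, `done v` a memoized value. -/
inductive Storable : Type
  | pend : Ident → Tm Ident → Env → Storable
  | todo : Closure → Storable
  | done : Value → Storable
  deriving DecidableEq

/-- Stores map locations to storable values. -/
abbrev Store : Type := List (Loc × Storable)

/-- Stack frames: `arg c` is `(□ c)`, `appL t` is `(t □)`, `lamF x` is `λx.□`,
`cache ℓ` is `ℓ := □`. -/
inductive Frame : Type
  | arg : Closure → Frame
  | appL : Tm Ident → Frame
  | lamF : Ident → Frame
  | cache : Loc → Frame
  deriving DecidableEq

abbrev Stack : Type := List Frame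

/-- Machine configurations: evaluation mode `⟨c, s, σ⟩▸` and continue mode `⟨σ, v, s⟩◂`. -/
inductive Conf : Type
  | eval : Closure → Stack → Store → Conf
  | cont : Store → Value → Stack → Conf

/-- The initial configuration loading a term. -/
def Conf.init (t : Tm Ident) : Conf := .eval (t, []) [] []

def Conf.store : Conf → Store
  | .eval _ _ σ => σ
  | .cont σ _ _ => σ

def Conf.stack : Conf → Stack
  | .eval _ s _ => s
  | .cont _ _ s => s

/- Identifiers occurring in a configuration (used for freshness of generated names). -/
def tmVars : Tm Ident → List Ident
  | .var x => [x]
  | .app a b => tmVars a ++ tmVars b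
  | .lam x t => x :: tmVars t

def envVars (e : Env) : List Ident := e.map Prod.fst

def valVars : Value → List Ident
  | .tm t => tmVars t
  | .abs x t e _ => x :: (tmVars t ++ envVars e)

def storableVars : Storable → List Ident
  | .pend x t e => x :: (tmVars t ++ envVars e)
  | .todo c => tmVars c.1 ++ envVars c.2
  | .done v => valVars v

def frameVars : Frame → List Ident
  | .arg c => tmVars c.1 ++ envVars c.2
  | .appL t => tmVars t
  | .lamF x => [x]
  | .cache _ => []

def stackVars (s : Stack) : List Ident := s.foldr (fun f acc => frameVars f ++ acc) []

def storeVars (σ : Store) : List Ident := σ.foldr (fun p acc => storableVars p.2 ++ acc) []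

def confVars : Conf → List Ident
  | .eval c s σ => tmVars c.1 ++ envVars c.2 ++ stackVars s ++ storeVars σ
  | .cont σ v s => valVars v ++ stackVars s ++ storeVars σ

/-- The top of the stack is not an argument frame. -/
def Stack.noArgTop : Stack → Prop
  | Frame.arg _ :: _ => False
  | _ => True

/-- The top of the stack is not a memoization frame. -/
def Stack.noCacheTop : Stack → Prop
  | Frame.cache _ :: _ => False
  | _ => True

/-- The eleven transitions of the RKNL abstract machine, indexed by rule number. -/
inductive Step : ℕ → Conf → Conf → Prop
  | r1 {t1 t2 : Tm Ident} {e : Env} {s : Stack} {σ : Store} :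
      Step 1 (.eval (.app t1 t2, e) s σ) (.eval (t1, e) (.arg (t2, e) :: s) σ)
  | r2 {x : Ident} {t : Tm Ident} {e : Env} {s : Stack} {σ : Store} {ℓ : Loc}
      (h : lookupL σ ℓ = none) :
      Step 2 (.eval (.lam x t, e) s σ) (.cont ((ℓ, .pend x t e) :: σ) (.abs x t e ℓ) s)
  | r3 {x : Ident} {e e2 : Env} {s : Stack} {σ : Store} {ℓ : Loc} {t : Tm Ident}
      (he : lookupL e x = some ℓ) (hσ : lookupL σ ℓ = some (.todo (t, e2))) :
      Step 3 (.eval (.var x, e) s σ) (.eval (t, e2) (.cache ℓ :: s) σ)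
  | r4done {x : Ident} {e : Env} {s : Stack} {σ : Store} {ℓ : Loc} {v : Value}
      (he : lookupL e x = some ℓ) (hσ : lookupL σ ℓ = some (.done v)) :
      Step 4 (.eval (.var x, e) s σ) (.cont σ v s)
  | r4free {x : Ident} {e : Env} {s : Stack} {σ : Store}
      (he : lookupL e x = none) :
      Step 4 (.eval (.var x, e) s σ) (.cont σ (.tm (.var x)) s)
  | r5 {σ : Store} {v : Value} {ℓ : Loc} {s : Stack} :
      Step 5 (.cont σ v (.cache ℓ :: s)) (.cont (updL σ ℓ (.done v)) v s)
  | r6 {σ : Store} {x : Ident} {t t2 : Tm Ident} {e e2 : Env} {ℓ ℓ2 : Loc} {s : Stack}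
      (h : lookupL σ ℓ2 = none) :
      Step 6 (.cont σ (.abs x t e ℓ) (.arg (t2, e2) :: s))
             (.eval (t, (x, ℓ2) :: e) s ((ℓ2, .todo (t2, e2)) :: σ))
  | r7 {σ : Store} {x x' x0 : Ident} {t t0 : Tm Ident} {e e0 : Env} {ℓ ℓ2 : Loc} {s : Stack}
      (hσ : lookupL σ ℓ = some (.pend x0 t0 e0))
      (hs1 : Stack.noArgTop s) (hs2 : Stack.noCacheTop s)
      (hℓ2 : lookupL σ ℓ2 = none)
      (hx' : x' ∉ confVars (.cont σ (.abs x t e ℓ) s)) :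
      Step 7 (.cont σ (.abs x t e ℓ) s)
             (.eval (t, (x, ℓ2) :: e) (.lamF x' :: .cache ℓ :: s)
                    ((ℓ2, .done (.tm (.var x'))) :: σ))
  | r8 {σ : Store} {x : Ident} {t : Tm Ident} {e : Env} {ℓ : Loc} {s : Stack} {v : Value}
      (hσ : lookupL σ ℓ = some (.done v))
      (hs1 : Stack.noArgTop s) (hs2 : Stack.noCacheTop s) :
      Step 8 (.cont σ (.abs x t e ℓ) s) (.cont σ v s)
  | r9 {σ : Store} {t t2 : Tm Ident} {e2 : Env} {s : Stack} :
      Step 9 (.cont σ (.tm t) (.arg (t2, e2) :: s)) (.eval (t2, e2) (.appL t :: s) σ)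
  | r10 {σ : Store} {t1 t2 : Tm Ident} {s : Stack} :
      Step 10 (.cont σ (.tm t2) (.appL t1 :: s)) (.cont σ (.tm (.app t1 t2)) s)
  | r11 {σ : Store} {t : Tm Ident} {x : Ident} {s : Stack} :
      Step 11 (.cont σ (.tm t) (.lamF x :: s)) (.cont σ (.tm (.lam x t)) s)

/-- Reachability by machine transitions. -/
inductive Reach (k0 : Conf) : Conf → Prop
  | refl : Reach k0 k0
  | step {k k' : Conf} {r : ℕ} : Reach k0 k → Step r k k' → Reach k0 k'

/- Generic syntax material used by the decoding: variable renaming of terms,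
one-hole contexts, neutral/normal terms, normal-order contexts,
capture-avoiding substitution, normal-order reduction and α-equivalence. -/

def Tm.mapVar {V V' : Type} (f : V → V') : Tm V → Tm V'
  | .var x => .var (f x)
  | .app a b => .app (Tm.mapVar f a) (Tm.mapVar f b)
  | .lam x t => .lam (f x) (Tm.mapVar f t)

/-- Variables of decoded terms: `Sum.inl x` is an ordinary identifier
(free variables and generated fresh names), `Sum.inr x` is the overlined
(marked) copy `x̄`, taken from a disjoint copy of the set of identifiers. -/
abbrev W : Type := Ident ⊕ Ident

/-- Embedding of machine terms into decoded terms. -/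
def emb (t : Tm Ident) : Tm W := Tm.mapVar Sum.inl t

/-- One-hole contexts. -/
inductive Ctx (V : Type) : Type
  | hole : Ctx V
  | appL : Ctx V → Tm V → Ctx V
  | appR : Tm V → Ctx V → Ctx V
  | lam : V → Ctx V → Ctx V

def Ctx.plug {V : Type} : Ctx V → Tm V → Tm V
  | .hole, t => t
  | .appL C u, t => .app (Ctx.plug C t) u
  | .appR u C, t => .app u (Ctx.plug C t)
  | .lam x C, t => .lam x (Ctx.plug C t)

def Ctx.comp {V : Type} : Ctx V → Ctx V → Ctx V
  | .hole, D => D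
  | .appL C u, D => .appL (Ctx.comp C D) u
  | .appR u C, D => .appR u (Ctx.comp C D)
  | .lam x C, D => .lam x (Ctx.comp C D)

mutual
  inductive Neutral {V : Type} : Tm V → Prop
    | var (x : V) : Neutral (.var x)
    | app {a n : Tm V} : Neutral a → NormalTm n → Neutral (.app a n)
  inductive NormalTm {V : Type} : Tm V → Prop
    | lam {x : V} {t : Tm V} : NormalTm t → NormalTm (.lam x t)
    | neu {a : Tm V} : Neutral a → NormalTm a
end

mutual
  inductive NOCtx {V : Type} : Ctx V → Prop
    | bar {C : Ctx V} : NOBar C → NOCtx C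
    | lam {x : V} {C : Ctx V} : NOCtx C → NOCtx (.lam x C)
  inductive NOBar {V : Type} : Ctx V → Prop
    | hole : NOBar .hole
    | appL {C : Ctx V} {t : Tm V} : NOBar C → NOBar (.appL C t)
    | appR {a : Tm V} {C : Ctx V} : Neutral a → NOCtx C → NOBar (.appR a C)
end

/-- `x` occurs free in a term. -/
inductive FreeIn {V : Type} (x : V) : Tm V → Prop
  | var : FreeIn x (.var x)
  | appL {a b : Tm V} : FreeIn x a → FreeIn x (.app a b)
  | appR {a b : Tm V} : FreeIn x b → FreeIn x (.app a b)
  | lam {y : V} {t : Tm V} : x ≠ y → FreeIn x t → FreeIn x (.lam y t)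

/-- Capture-avoiding substitution `t{x := u}` (as a relation, allowing
α-renaming of binders that would capture variables of `u`). -/
inductive SubstRel {V : Type} : V → Tm V → Tm V → Tm V → Prop
  | var_eq {x : V} {u : Tm V} : SubstRel x u (.var x) u
  | var_ne {x y : V} {u : Tm V} : y ≠ x → SubstRel x u (.var y) (.var y)
  | app {x : V} {u a a' b b' : Tm V} : SubstRel x u a a' → SubstRel x u b b' →
      SubstRel x u (.app a b) (.app a' b')
  | lam_same {x : V} {u t : Tm V} : SubstRel x u (.lam x t) (.lam x t)
  | lam {x y : V} {u t t' : Tm V} : y ≠ x → ¬ FreeIn y u → SubstRel x u t t' →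
      SubstRel x u (.lam y t) (.lam y t')
  | lam_rename {x y z : V} {u t t0 t' : Tm V} : y ≠ x → FreeIn y u →
      z ≠ x → ¬ FreeIn z u → ¬ FreeIn z t →
      SubstRel y (.var z) t t0 → SubstRel x u t0 t' →
      SubstRel x u (.lam y t) (.lam z t')

/-- One step of normal-order reduction: β-contraction in a normal-order context. -/
inductive NOStep {V : Type} : Tm V → Tm V → Prop
  | mk {N : Ctx V} {x : V} {b u r : Tm V} :
      NOCtx N → SubstRel x u b r →
      NOStep (N.plug (.app (.lam x b) u)) (N.plug r)

/-- Correspondence of variables under a list of bound-variable renamings. -/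
inductive AVar {V : Type} : List (V × V) → V → V → Prop
  | nil {x : V} : AVar [] x x
  | here {x y : V} {ρ : List (V × V)} : AVar ((x, y) :: ρ) x y
  | there {x y a b : V} {ρ : List (V × V)} :
      x ≠ a → y ≠ b → AVar ρ x y → AVar ((a, b) :: ρ) x y

/-- α-equivalence up to a list of bound-variable renamings. -/
inductive Alpha {V : Type} : List (V × V) → Tm V → Tm V → Prop
  | var {ρ : List (V × V)} {x y : V} : AVar ρ x y → Alpha ρ (.var x) (.var y)
  | app {ρ : List (V × V)} {a a' b b' : Tm V} :
      Alpha ρ a a' → Alpha ρ b b' → Alpha ρ (.app a b) (.app a' b')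
  | lam {ρ : List (V × V)} {x y : V} {t t' : Tm V} :
      Alpha ((x, y) :: ρ) t t' → Alpha ρ (.lam x t) (.lam y t')

/-- α-equivalence: equality up to renaming of bound variables. -/
def AlphaEq {V : Type} (t t' : Tm V) : Prop := Alpha [] t t'

/-- Subterm relation. -/
inductive Subtm {V : Type} : Tm V → Tm V → Prop
  | refl (t : Tm V) : Subtm t t
  | appL {s a b : Tm V} : Subtm s a → Subtm s (.app a b)
  | appR {s a b : Tm V} : Subtm s b → Subtm s (.app a b)
  | lam {s t : Tm V} {x : V} : Subtm s t → Subtm s (.lam x t)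

def IsRedex {V : Type} (t : Tm V) : Prop := ∃ (x : V) (b u : Tm V), t = .app (.lam x b) u

/-- β-normal form: no subterm is a β-redex. -/
def BetaNormal {V : Type} (t : Tm V) : Prop := ∀ s : Tm V, Subtm s t → ¬ IsRedex s

/- The history-dependent decoding of RKNL configurations. -/

/-- `HistFrom k0 H k` : `H` is the full sequence of configurations (oldest
first) of an execution from `k0` to `k`. -/
inductive HistFrom (k0 : Conf) : List Conf → Conf → Prop
  | refl : HistFrom k0 [k0] k0
  | step {H : List Conf} {k k' : Conf} {r : ℕ} :
      HistFrom k0 H k → Step r k k' → HistFrom k0 (H ++ [k']) k'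

/-- `initOf H ℓ = some (H', sv)` : in the history `H`, location `ℓ` was
initialized with the storable value `sv`, and `H'` is the prefix of the history
up to (and including) the configuration where `ℓ` was initialized. -/
def initOf : List Conf → Loc → Option (List Conf × Storable)
  | [], _ => none
  | k :: H, ℓ =>
    match lookupL (Conf.store k) ℓ with
    | some sv => some ([k], sv)
    | none => Option.map (fun p => (k :: p.1, p.2)) (initOf H ℓ)

/-- Decoding environments: an identifier is mapped either to a store location
(`Sum.inl ℓ`) or to an overlined variable `ȳ` (`Sum.inr y`) introduced when
decoding an abstraction. -/
abbrev DEnv : Type := List (Ident × (Loc ⊕ Ident))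

def embEnv (e : Env) : DEnv := e.map fun p => (p.1, Sum.inl p.2)

/-- Decoding of closures relative to an execution history:
`DecC H t e d` means the closure with term `t` and decoding environment `e`
decodes to the term `d` relative to the history `H`. A variable bound to a
location initialized (by rule 6) with an argument thunk decodes to the decoding
of that thunk at the time of initialization; a variable bound to a location
initialized (by rule 7) with a fresh variable decodes to that variable; an
unbound variable decodes to itself. -/
inductive DecC : List Conf → Tm Ident → DEnv → Tm W → Prop
  | app {H : List Conf} {t1 t2 : Tm Ident} {e : DEnv} {d1 d2 : Tm W} :
      DecC H t1 e d1 → DecC H t2 e d2 → DecC H (.app t1 t2) e (.app d1 d2)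
  | lam {H : List Conf} {x : Ident} {t : Tm Ident} {e : DEnv} {d : Tm W} :
      DecC H t ((x, Sum.inr x) :: e) d → DecC H (.lam x t) e (.lam (Sum.inr x) d)
  | var_bar {H : List Conf} {x y : Ident} {e : DEnv} :
      lookupL e x = some (Sum.inr y) → DecC H (.var x) e (.var (Sum.inr y))
  | var_arg {H H' : List Conf} {x : Ident} {e : DEnv} {ℓ : Loc}
      {t2 : Tm Ident} {e2 : Env} {d : Tm W} :
      lookupL e x = some (Sum.inl ℓ) →
      initOf H ℓ = some (H', .todo (t2, e2)) →
      DecC H' t2 (embEnv e2) d →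
      DecC H (.var x) e d
  | var_fresh {H H' : List Conf} {x x' : Ident} {e : DEnv} {ℓ : Loc} :
      lookupL e x = some (Sum.inl ℓ) →
      initOf H ℓ = some (H', .done (.tm (.var x'))) →
      DecC H (.var x) e (.var (Sum.inl x'))
  | var_free {H : List Conf} {x : Ident} {e : DEnv} :
      lookupL e x = none → DecC H (.var x) e (.var (Sum.inl x))

/-- Decoding of values. -/
inductive DecV : List Conf → Value → Tm W → Prop
  | tm {H : List Conf} {t : Tm Ident} : DecV H (.tm t) (emb t)
  | abs {H : List Conf} {x : Ident} {t : Tm Ident} {e : Env} {ℓ : Loc} {d : Tm W} :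
      DecC H (.lam x t) (embEnv e) d → DecV H (.abs x t e ℓ) d

/-- Decoding of stacks into one-hole contexts (memoization frames are ignored). -/
inductive DecS : List Conf → Stack → Ctx W → Prop
  | nil {H : List Conf} : DecS H [] .hole
  | arg {H : List Conf} {t : Tm Ident} {e : Env} {s : Stack} {C : Ctx W} {d : Tm W} :
      DecS H s C → DecC H t (embEnv e) d →
      DecS H (.arg (t, e) :: s) (C.comp (.appL .hole d))
  | appL {H : List Conf} {t : Tm Ident} {s : Stack} {C : Ctx W} :
      DecS H s C → DecS H (.appL t :: s) (C.comp (.appR (emb t) .hole))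
  | lamF {H : List Conf} {x : Ident} {s : Stack} {C : Ctx W} :
      DecS H s C → DecS H (.lamF x :: s) (C.comp (.lam (Sum.inl x) .hole))
  | cache {H : List Conf} {ℓ : Loc} {s : Stack} {C : Ctx W} :
      DecS H s C → DecS H (.cache ℓ :: s) C

/-- Decoding of configurations: the decoded focus is plugged into the decoded stack. -/
inductive DecK : List Conf → Conf → Tm W → Prop
  | eval {H : List Conf} {t : Tm Ident} {e : Env} {s : Stack} {σ : Store}
      {C : Ctx W} {d : Tm W} :
      DecS H s C → DecC H t (embEnv e) d → DecK H (.eval (t, e) s σ) (C.plug d)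
  | cont {H : List Conf} {σ : Store} {v : Value} {s : Stack} {C : Ctx W} {d : Tm W} :
      DecS H s C → DecV H v d → DecK H (.cont σ v s) (C.plug d)

/-!
Along every run, each allocated location is either a *variable cell* (allocated by rules 6 and 7
and bound in environments; it holds a thunk, a neutral term or an abstraction closure) or an
*abstraction cell* (allocated by rule 2; it holds the placeholder of a λ or its memoized normal
form). Moreover environments point only to variable cells, closures to abstraction cells, term
values are normal, `appL` frames hold neutral terms, and a value returned to an argument frame or
to a variable cell is neutral or a closure. The last clause keeps normal λ's out of function
position, and it is why memoizing a value never changes the kind of its cell.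

Under this invariant every configuration other than `⟨σ, t, []⟩` can step: the only stuck lookups,
a variable bound to a placeholder and an abstraction cell holding a thunk or a closure, are
excluded. Normal terms contain no redex, and `⟨σ, t, []⟩` decodes to `t`.
-/

theorem lookupL_cons {β : Type} (l : List (ℕ × β)) (a x : ℕ) (b : β) :
    lookupL ((a, b) :: l) x = if x = a then some b else lookupL l x := rfl

theorem lookupL_cons_self {β : Type} (l : List (ℕ × β)) (a : ℕ) (b : β) :
    lookupL ((a, b) :: l) a = some b := if_pos rfl

theorem lookupL_eq_none_of_notMem {β : Type} {x : ℕ} :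
    ∀ {l : List (ℕ × β)}, x ∉ l.map Prod.fst → lookupL l x = none
  | [], _ => rfl
  | (a, b) :: l, h => by
    simp only [List.map_cons, List.mem_cons, not_or] at h
    rw [lookupL_cons, if_neg h.1, lookupL_eq_none_of_notMem h.2]

theorem exists_notMem_list (l : List ℕ) : ∃ x, x ∉ l :=
  (Infinite.exists_notMem_finset l.toFinset).imp fun _ => mt List.mem_toFinset.mpr

theorem exists_lookupL_eq_none {β : Type} (l : List (ℕ × β)) : ∃ x, lookupL l x = none :=
  (exists_notMem_list (l.map Prod.fst)).imp fun _ => lookupL_eq_none_of_notMem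

theorem lookupL_updL {β : Type} (x : ℕ) (b : β) (y : ℕ) :
    ∀ l : List (ℕ × β), lookupL (updL l x b) y = (lookupL l y).map fun c => if y = x then b else c
  | [] => rfl
  | (a, c) :: l => by
    have ih := lookupL_updL x b y l
    simp only [updL, List.map_cons] at ih ⊢
    by_cases hax : a = x
    · subst hax
      by_cases hy : y = a <;> simp [lookupL, hy, ih]
    · by_cases hy : y = a <;> simp [lookupL, hax, hy, ih]

def Value.NeutralOrAbs : Value → Prop
  | .tm t => Neutral t
  | .abs .. => True

def Value.IsNormalLam : Value → Prop
  | .tm t => NormalTm t ∧ ∃ x u, t = .lam x u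
  | .abs .. => False

def Storable.IsVarCell : Storable → Prop
  | .todo _ => True
  | .done v => v.NeutralOrAbs
  | .pend .. => False

def Storable.IsAbsCell : Storable → Prop
  | .pend .. => True
  | .done v => v.IsNormalLam
  | .todo _ => False

theorem Neutral.ne_lam {V : Type} {a : Tm V} (h : Neutral a) (x : V) (t : Tm V) :
    a ≠ .lam x t := by
  cases h <;> simp

theorem Storable.not_isVarCell_of_isAbsCell {sv : Storable} (hB : sv.IsAbsCell) :
    ¬ sv.IsVarCell := by
  rcases sv with _ | _ | (t | _)
  · exact id
  · exact hB.elim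
  · obtain ⟨-, x, u, rfl⟩ := hB
    exact fun hA => hA.ne_lam x u rfl
  · exact hB.elim

def IsVarLoc (σ : Store) (ℓ : Loc) : Prop := ∃ sv, lookupL σ ℓ = some sv ∧ sv.IsVarCell

def IsAbsLoc (σ : Store) (ℓ : Loc) : Prop := ∃ sv, lookupL σ ℓ = some sv ∧ sv.IsAbsCell

theorem IsAbsLoc.not_isVarLoc {σ : Store} {ℓ : Loc} (hB : IsAbsLoc σ ℓ) : ¬ IsVarLoc σ ℓ := by
  obtain ⟨sv, hsv, hsB⟩ := hB
  rintro ⟨sv', hsv', hsA⟩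
  rw [hsv] at hsv'
  cases hsv'
  exact Storable.not_isVarCell_of_isAbsCell hsB hsA

def EnvWF (σ : Store) (e : Env) : Prop := ∀ x ℓ, lookupL e x = some ℓ → IsVarLoc σ ℓ

def ValueWF (σ : Store) : Value → Prop
  | .tm t => NormalTm t
  | .abs _ _ e ℓ => EnvWF σ e ∧ IsAbsLoc σ ℓ

def StorableWF (σ : Store) : Storable → Prop
  | .pend _ _ e => EnvWF σ e
  | .todo c => EnvWF σ c.2
  | .done v => ValueWF σ v

def StoreWF (σ : Store) : Prop := ∀ ℓ sv, lookupL σ ℓ = some sv → StorableWF σ sv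

def TopCacheVar (σ : Store) : Stack → Prop
  | .cache ℓ :: _ => IsVarLoc σ ℓ
  | _ => True

/-- The side condition of rules 7 and 8, under which an abstraction returned to the stack is
normalized under its binder. -/
def Stack.ForcesBody (s : Stack) : Prop := Stack.noArgTop s ∧ Stack.noCacheTop s

def StackWF (σ : Store) : Stack → Prop
  | [] => True
  | .arg c :: s => EnvWF σ c.2 ∧ TopCacheVar σ s ∧ StackWF σ s
  | .appL t :: s => Neutral t ∧ TopCacheVar σ s ∧ StackWF σ s
  | .lamF _ :: s => (∃ ℓ s', s = .cache ℓ :: s' ∧ IsAbsLoc σ ℓ) ∧ StackWF σ s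
  | .cache ℓ :: s =>
      ((IsVarLoc σ ℓ ∧ TopCacheVar σ s) ∨ (IsAbsLoc σ ℓ ∧ Stack.ForcesBody s)) ∧ StackWF σ s

def ValueFitsStack (σ : Store) (v : Value) : Stack → Prop
  | .arg _ :: _ => v.NeutralOrAbs
  | .cache ℓ :: _ => (IsVarLoc σ ℓ → v.NeutralOrAbs) ∧ (IsAbsLoc σ ℓ → v.IsNormalLam)
  | _ => True

def Invariant : Conf → Prop
  | .eval c s σ => StoreWF σ ∧ EnvWF σ c.2 ∧ StackWF σ s ∧ TopCacheVar σ s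
  | .cont σ v s => StoreWF σ ∧ StackWF σ s ∧ ValueWF σ v ∧ ValueFitsStack σ v s

theorem EnvWF.cons {σ : Store} {e : Env} {x : Ident} {ℓ : Loc} (he : EnvWF σ e)
    (hℓ : IsVarLoc σ ℓ) : EnvWF σ ((x, ℓ) :: e) := by
  intro y ℓ' hy
  rw [lookupL_cons] at hy
  split_ifs at hy
  · cases hy
    exact hℓ
  · exact he y ℓ' hy

theorem ValueFitsStack.of_neutralOrAbs {σ : Store} {v : Value} {s : Stack}
    (hv : v.NeutralOrAbs) (hs : TopCacheVar σ s) : ValueFitsStack σ v s := by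
  rcases s with _ | ⟨_ | _ | _ | ℓ, s⟩
  all_goals try trivial
  exact ⟨fun _ => hv, fun hB => (hB.not_isVarLoc hs).elim⟩

theorem ValueFitsStack.of_forcesBody {σ : Store} {v : Value} {s : Stack}
    (hs : Stack.ForcesBody s) : ValueFitsStack σ v s := by
  rcases s with _ | ⟨_ | _ | _ | _, s⟩
  all_goals first | trivial | exact (hs.1).elim | exact (hs.2).elim

section KindPreserving

def KindPreserving (σ σ' : Store) : Prop :=
  (∀ ℓ, IsVarLoc σ ℓ → IsVarLoc σ' ℓ) ∧ (∀ ℓ, IsAbsLoc σ ℓ → IsAbsLoc σ' ℓ)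

variable {σ σ' : Store} (hσ : KindPreserving σ σ')
include hσ

theorem EnvWF.mono {e : Env} (he : EnvWF σ e) : EnvWF σ' e :=
  fun x ℓ hx => hσ.1 ℓ (he x ℓ hx)

theorem ValueWF.mono : ∀ {v : Value}, ValueWF σ v → ValueWF σ' v
  | .tm _, hv => hv
  | .abs .., hv => ⟨hv.1.mono hσ, hσ.2 _ hv.2⟩

theorem StorableWF.mono : ∀ {sv : Storable}, StorableWF σ sv → StorableWF σ' sv
  | .pend .., h => EnvWF.mono hσ h
  | .todo _, h => EnvWF.mono hσ h
  | .done _, h => ValueWF.mono hσ h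

theorem TopCacheVar.mono : ∀ {s : Stack}, TopCacheVar σ s → TopCacheVar σ' s
  | [], _ | .arg _ :: _, _ | .appL _ :: _, _ | .lamF _ :: _, _ => trivial
  | .cache ℓ :: _, h => hσ.1 ℓ h

theorem StackWF.mono : ∀ {s : Stack}, StackWF σ s → StackWF σ' s
  | [], _ => trivial
  | .arg _ :: _, ⟨he, ht, hs⟩ => ⟨he.mono hσ, ht.mono hσ, hs.mono⟩
  | .appL _ :: _, ⟨hn, ht, hs⟩ => ⟨hn, ht.mono hσ, hs.mono⟩
  | .lamF _ :: _, ⟨⟨ℓ, s', heq, hB⟩, hs⟩ => ⟨⟨ℓ, s', heq, hσ.2 ℓ hB⟩, hs.mono⟩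
  | .cache _ :: _, ⟨.inl ⟨hA, ht⟩ , hs⟩ => ⟨.inl ⟨hσ.1 _ hA, ht.mono hσ⟩, hs.mono⟩
  | .cache _ :: _, ⟨.inr ⟨hB, hf⟩ , hs⟩ => ⟨.inr ⟨hσ.2 _ hB, hf⟩, hs.mono⟩

end KindPreserving

section SetsLoc

def SetsLoc (σ σ' : Store) (ℓ0 : Loc) (sv : Storable) : Prop :=
  ∀ ℓ, lookupL σ' ℓ = if ℓ = ℓ0 then some sv else lookupL σ ℓ

theorem setsLoc_cons (σ : Store) (ℓ0 : Loc) (sv : Storable) :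
    SetsLoc σ ((ℓ0, sv) :: σ) ℓ0 sv :=
  fun ℓ => lookupL_cons σ ℓ0 ℓ sv

theorem setsLoc_updL {σ : Store} {ℓ0 : Loc} {sv0 : Storable} (h0 : lookupL σ ℓ0 = some sv0)
    (sv : Storable) : SetsLoc σ (updL σ ℓ0 sv) ℓ0 sv := by
  intro ℓ
  rw [lookupL_updL]
  split_ifs with hℓ
  · simp [hℓ, h0]
  · cases lookupL σ ℓ <;> simp

variable {σ σ' : Store} {ℓ0 : Loc} {sv : Storable} (h : SetsLoc σ σ' ℓ0 sv)
include h

theorem SetsLoc.kindPreserving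
    (hkind : ∀ sv0, lookupL σ ℓ0 = some sv0 →
      (sv0.IsVarCell → sv.IsVarCell) ∧ (sv0.IsAbsCell → sv.IsAbsCell)) :
    KindPreserving σ σ' := by
  have key : ∀ ℓ sv', lookupL σ ℓ = some sv' →
      ∃ sv'', lookupL σ' ℓ = some sv'' ∧ (sv'.IsVarCell → sv''.IsVarCell) ∧
        (sv'.IsAbsCell → sv''.IsAbsCell) := by
    intro ℓ sv' hℓ
    rw [h ℓ]
    split_ifs with hℓ0
    · subst hℓ0
      exact ⟨sv, rfl, hkind sv' hℓ⟩
    · exact ⟨sv', hℓ, id, id⟩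
  constructor
  · rintro ℓ ⟨sv', hℓ, hA⟩
    obtain ⟨sv'', hℓ', hA', -⟩ := key ℓ sv' hℓ
    exact ⟨sv'', hℓ', hA' hA⟩
  · rintro ℓ ⟨sv', hℓ, hB⟩
    obtain ⟨sv'', hℓ', -, hB'⟩ := key ℓ sv' hℓ
    exact ⟨sv'', hℓ', hB' hB⟩

theorem SetsLoc.storeWF (hσ : KindPreserving σ σ') (hwf : StoreWF σ)
    (hsv : StorableWF σ' sv) : StoreWF σ' := by
  intro ℓ sv' hℓ
  rw [h ℓ] at hℓ
  split_ifs at hℓ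
  · cases hℓ
    exact hsv
  · exact (hwf ℓ sv' hℓ).mono hσ

end SetsLoc

theorem kindPreserving_cons {σ : Store} {ℓ0 : Loc} (hfresh : lookupL σ ℓ0 = none)
    (sv : Storable) : KindPreserving σ ((ℓ0, sv) :: σ) :=
  (setsLoc_cons σ ℓ0 sv).kindPreserving fun _ h => by simp [hfresh] at h

theorem invariant_init (t : Tm Ident) : Invariant (Conf.init t) :=
  ⟨fun _ _ h => by simp [lookupL] at h, fun _ _ h => by simp [lookupL] at h, trivial, trivial⟩

theorem Invariant.step_eval {c : Closure} {s : Stack} {σ : Store} {r : ℕ} {k' : Conf}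
    (hI : Invariant (.eval c s σ)) (hstep : Step r (.eval c s σ) k') : Invariant k' := by
  obtain ⟨hσ, he, hs, htop⟩ := hI
  cases hstep with
  | r1 => exact ⟨hσ, he, ⟨he, htop, hs⟩, trivial⟩
  | @r2 x t e s σ ℓ hfresh =>
    have hk := kindPreserving_cons hfresh (.pend x t e)
    exact ⟨(setsLoc_cons σ ℓ _).storeWF hk hσ (he.mono hk), hs.mono hk,
      ⟨he.mono hk, _, lookupL_cons_self σ ℓ _, trivial⟩, .of_neutralOrAbs trivial (htop.mono hk)⟩
  | r3 hx hℓ =>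
    have hvar : IsVarLoc _ _ := ⟨_, hℓ, trivial⟩
    exact ⟨hσ, hσ _ _ hℓ, ⟨.inl ⟨hvar, htop⟩, hs⟩, hvar⟩
  | r4done hx hℓ =>
    obtain ⟨sv, hsv, hvar⟩ := he _ _ hx
    rw [hℓ] at hsv
    cases hsv
    exact ⟨hσ, hs, hσ _ _ hℓ, .of_neutralOrAbs hvar htop⟩
  | r4free hx =>
    exact ⟨hσ, hs, .neu (.var _), .of_neutralOrAbs (.var _) htop⟩

theorem Invariant.step_cache {σ : Store} {v : Value} {ℓ : Loc} {s : Stack}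
    (hI : Invariant (.cont σ v (.cache ℓ :: s))) :
    Invariant (.cont (updL σ ℓ (.done v)) v s) := by
  obtain ⟨hσ, ⟨hcache, hs⟩, hv, hvar, habs⟩ := hI
  obtain ⟨sv0, h0⟩ : ∃ sv0, lookupL σ ℓ = some sv0 := by
    rcases hcache with ⟨⟨sv0, h0, -⟩, -⟩ | ⟨⟨sv0, h0, -⟩, -⟩ <;> exact ⟨sv0, h0⟩
  have hset := setsLoc_updL h0 (.done v)
  have hk : KindPreserving σ (updL σ ℓ (.done v)) := hset.kindPreserving fun sv0' h0' => by
    rw [h0] at h0'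
    cases h0'
    exact ⟨fun hA => hvar ⟨_, h0, hA⟩, fun hB => habs ⟨_, h0, hB⟩⟩
  refine ⟨hset.storeWF hk hσ (hv.mono hk), hs.mono hk, hv.mono hk, ?_⟩
  rcases hcache with ⟨hA, htop⟩ | ⟨-, hbody⟩
  · exact .of_neutralOrAbs (hvar hA) (htop.mono hk)
  · exact .of_forcesBody hbody

theorem Invariant.step_cont {σ : Store} {v : Value} {s : Stack} {r : ℕ} {k' : Conf}
    (hI : Invariant (.cont σ v s)) (hstep : Step r (.cont σ v s) k') : Invariant k' := by
  cases hstep with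
  | r5 => exact hI.step_cache
  | @r6 σ x t t2 e e2 ℓ ℓ2 s hfresh =>
    obtain ⟨hσ, ⟨he2, htop, hs⟩, ⟨he, -⟩, -⟩ := hI
    have hk := kindPreserving_cons hfresh (.todo (t2, e2))
    exact ⟨(setsLoc_cons σ ℓ2 _).storeWF hk hσ (he2.mono hk),
      (he.mono hk).cons ⟨_, lookupL_cons_self σ ℓ2 _, trivial⟩, hs.mono hk, htop.mono hk⟩
  | @r7 σ x x' x0 t t0 e e0 ℓ ℓ2 s _ hs1 hs2 hfresh _ =>
    obtain ⟨hσ, hs, ⟨he, habs⟩, -⟩ := hI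
    have hk := kindPreserving_cons hfresh (.done (.tm (.var x')))
    have habs' := hk.2 ℓ habs
    exact ⟨(setsLoc_cons σ ℓ2 _).storeWF hk hσ (.neu (.var x')),
      (he.mono hk).cons ⟨_, lookupL_cons_self σ ℓ2 _, .var x'⟩,
      ⟨⟨ℓ, s, rfl, habs'⟩, .inr ⟨habs', hs1, hs2⟩, hs.mono hk⟩, trivial⟩
  | r8 hℓ hs1 hs2 =>
    obtain ⟨hσ, hs, -, -⟩ := hI
    exact ⟨hσ, hs, hσ _ _ hℓ, .of_forcesBody ⟨hs1, hs2⟩⟩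
  | r9 =>
    obtain ⟨hσ, ⟨he2, htop, hs⟩, -, hneu⟩ := hI
    exact ⟨hσ, he2, ⟨hneu, htop, hs⟩, trivial⟩
  | r10 =>
    obtain ⟨hσ, ⟨hneu, htop, hs⟩, hv, -⟩ := hI
    exact ⟨hσ, hs, .neu (.app hneu hv), .of_neutralOrAbs (.app hneu hv) htop⟩
  | @r11 σ t x s =>
    obtain ⟨hσ, ⟨⟨ℓ, s', rfl, habs⟩, hs⟩, hv, -⟩ := hI
    exact ⟨hσ, hs, .lam hv, fun hvar => (habs.not_isVarLoc hvar).elim,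
      fun _ => ⟨.lam hv, x, t, rfl⟩⟩

theorem Invariant.step {k k' : Conf} {r : ℕ} (hI : Invariant k) (hstep : Step r k k') :
    Invariant k' := by
  cases k with
  | eval => exact hI.step_eval hstep
  | cont => exact hI.step_cont hstep

theorem Invariant.of_histFrom {t0 : Tm Ident} {H : List Conf} {k : Conf}
    (h : HistFrom (Conf.init t0) H k) : Invariant k := by
  induction h with
  | refl => exact invariant_init t0
  | step _ hstep ih => exact ih.step hstep

theorem exists_step_eval {t : Tm Ident} {e : Env} {s : Stack} {σ : Store} (he : EnvWF σ e) :
    ∃ r k', Step r (.eval (t, e) s σ) k' := by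
  cases t with
  | app t1 t2 => exact ⟨1, _, .r1⟩
  | lam x t =>
    obtain ⟨ℓ, hℓ⟩ := exists_lookupL_eq_none σ
    exact ⟨2, _, .r2 hℓ⟩
  | var x =>
    cases hx : lookupL e x with
    | none => exact ⟨4, _, .r4free hx⟩
    | some ℓ =>
      obtain ⟨sv, hℓ, hvar⟩ := he x ℓ hx
      rcases sv with _ | ⟨t, e2⟩ | v
      · exact hvar.elim
      · exact ⟨3, _, .r3 hx hℓ⟩
      · exact ⟨4, _, .r4done hx hℓ⟩

theorem exists_step_cont_abs {σ : Store} {x : Ident} {t : Tm Ident} {e : Env} {ℓ : Loc}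
    {s : Stack} (hℓ : IsAbsLoc σ ℓ) : ∃ r k', Step r (.cont σ (.abs x t e ℓ) s) k' := by
  by_cases hbody : Stack.ForcesBody s
  · obtain ⟨sv, hsv, habs⟩ := hℓ
    rcases sv with _ | _ | (_ | _)
    · obtain ⟨ℓ2, hℓ2⟩ := exists_lookupL_eq_none σ
      obtain ⟨x', hx'⟩ := exists_notMem_list (confVars (.cont σ (.abs x t e ℓ) s))
      exact ⟨7, _, .r7 hsv hbody.1 hbody.2 hℓ2 hx'⟩
    · exact habs.elim
    · exact ⟨8, _, .r8 hsv hbody.1 hbody.2⟩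
    · exact habs.elim
  · rcases s with _ | ⟨⟨t2, e2⟩ | _ | _ | _, s⟩
    all_goals try exact (hbody ⟨trivial, trivial⟩).elim
    · obtain ⟨ℓ2, hℓ2⟩ := exists_lookupL_eq_none σ
      exact ⟨6, _, .r6 hℓ2⟩
    · exact ⟨5, _, .r5⟩

theorem exists_step_cont_cons {σ : Store} {v : Value} {f : Frame} {s : Stack}
    (hv : ValueWF σ v) : ∃ r k', Step r (.cont σ v (f :: s)) k' := by
  rcases v with t | ⟨x, t, e, ℓ⟩
  · rcases f with ⟨t2, e2⟩ | _ | _ | _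
    · exact ⟨9, _, .r9⟩
    · exact ⟨10, _, .r10⟩
    · exact ⟨11, _, .r11⟩
    · exact ⟨5, _, .r5⟩
  · exact exists_step_cont_abs hv.2

theorem Invariant.eq_cont_nil_of_terminal {k : Conf} (hI : Invariant k)
    (hterm : ∀ r k', ¬ Step r k k') : ∃ σ t, k = .cont σ (.tm t) [] ∧ NormalTm t := by
  have stuck : ¬ ∃ r k', Step r k k' := fun ⟨r, k', hstep⟩ => hterm r k' hstep
  rcases k with ⟨t, e⟩ | ⟨σ, v, _ | ⟨f, s⟩⟩
  · exact (stuck (exists_step_eval hI.2.1)).elim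
  · rcases v with t | ⟨x, t, e, ℓ⟩
    · exact ⟨σ, t, rfl, hI.2.2.1⟩
    · exact (stuck (exists_step_cont_abs hI.2.2.1.2)).elim
  · exact (stuck (exists_step_cont_cons hI.2.2.1)).elim

section Normal

variable {V : Type}

theorem NormalTm.of_subtm {s t : Tm V} (hst : Subtm s t) (ht : NormalTm t) : NormalTm s := by
  induction hst with
  | refl => exact ht
  | appL _ ih =>
    obtain ⟨⟩ | ⟨⟨⟩ | ⟨ha, -⟩⟩ := ht
    exact ih (.neu ha)
  | appR _ ih =>
    obtain ⟨⟩ | ⟨⟨⟩ | ⟨-, hb⟩⟩ := ht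
    exact ih hb
  | lam _ ih =>
    obtain ⟨ht⟩ | ⟨⟨⟩⟩ := ht
    exact ih ht

theorem NormalTm.not_isRedex {t : Tm V} (ht : NormalTm t) : ¬ IsRedex t := by
  rintro ⟨x, b, u, rfl⟩
  obtain ⟨⟩ | ⟨⟨⟩ | ⟨ha, -⟩⟩ := ht
  exact ha.ne_lam x b rfl

theorem NormalTm.betaNormal {t : Tm V} (ht : NormalTm t) : BetaNormal t :=
  fun _ hs => (ht.of_subtm hs).not_isRedex

end Normal

theorem eq_emb_of_decK_cont_nil {H : List Conf} {σ : Store} {t : Tm Ident} {d : Tm W}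
    (hd : DecK H (.cont σ (.tm t) []) d) : d = emb t := by
  cases hd with
  | cont hs hv =>
    cases hs
    cases hv
    rfl

/-- Unload correctness: any reachable terminal configuration of RKNL is of the
form `⟨σ, t, []⟩` with `t` a term in β-normal form, and it decodes to `t` itself. -/
theorem unload_correctness {t0 : Tm Ident} {H : List Conf} {k : Conf}
    (h : HistFrom (Conf.init t0) H k)
    (hterm : ∀ (r : ℕ) (k' : Conf), ¬ Step r k k') :
    ∃ (σ : Store) (t : Tm Ident),
      k = .cont σ (.tm t) [] ∧ BetaNormal t ∧
      ∀ d : Tm W, DecK H k d → d = emb t := by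
  obtain ⟨σ, t, rfl, ht⟩ := (Invariant.of_histFrom h).eq_cont_nil_of_terminal hterm
  exact ⟨σ, t, rfl, ht.betaNormal, fun _ => eq_emb_of_decK_cont_nil⟩

end RKNL
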